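/- Let A be the group with presentation ⟨a, b | a^k b = b a^k⟩ with k ≥ 2. Then the mapping a ↦ a, b ↦ ba determines a well-defined automorphism η of A of infinite order. -/

import Mathlib

/-- Relator for `A = ⟨a, b | aᵏ b = b aᵏ⟩`, with `a = of 0`, `b = of 1`. -/
def relEvenDihedral (k : ℕ) : Set (FreeGroup (Fin 2)) :=
  {FreeGroup.of 0 ^ k * FreeGroup.of 1 * (FreeGroup.of 0 ^ k)⁻¹ * (FreeGroup.of 1)⁻¹}

/-!
Since `aᵏ` commutes with `b a^m` for every `m : ℤ`, the assignment `a ↦ a, b ↦ b a^m` defines an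
endomorphism `shear m` of `A`, and `shear m ∘ shear n = shear (m + n)`; hence `η = shear 1` is an
automorphism with `ηⁿ b = b aⁿ`. Mapping `A` onto `ℤ` by `a ↦ 1, b ↦ 0` shows that `a` has infinite
order, so no positive power of `η` fixes `b`.
-/

theorem MulAut.not_isOfFinOrder_of_pow_apply_eq_mul_pow {G : Type*} [Group G] {σ : MulAut G}
    {a b : G} (ha : ¬ IsOfFinOrder a) (h : ∀ n : ℕ, (σ ^ n) b = b * a ^ n) :
    ¬ IsOfFinOrder σ := by
  intro hσ
  obtain ⟨n, hn, hσn⟩ := hσ.exists_pow_eq_one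
  refine ha (isOfFinOrder_iff_pow_eq_one.2 ⟨n, hn, ?_⟩)
  simpa [hσn] using h n

namespace relEvenDihedral

open PresentedGroup

variable {k : ℕ}

theorem commute_of_zero_pow_of_one :
    Commute ((of 0 : PresentedGroup (relEvenDihedral k)) ^ k) (of 1) :=
  mul_inv_eq_iff_eq_mul.1 <| mul_inv_eq_one.1 <| by
    have h := one_of_mem (rels := relEvenDihedral k) rfl
    rwa [map_mul, map_mul, map_mul, map_inv, map_inv, map_pow] at h

section lift

variable {G : Type*} [Group G] {a b : G}

def lift (h : Commute (a ^ k) b) : PresentedGroup (relEvenDihedral k) →* G :=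
  toGroup (f := ![a, b]) <| by
    rintro r rfl
    simp [h.eq]

@[simp] theorem lift_of_zero (h : Commute (a ^ k) b) : lift h (of 0) = a := toGroup.of _

@[simp] theorem lift_of_one (h : Commute (a ^ k) b) : lift h (of 1) = b := toGroup.of _

end lift

theorem not_isOfFinOrder_of_zero :
    ¬ IsOfFinOrder (of 0 : PresentedGroup (relEvenDihedral k)) := fun h => by
  simpa using ((lift (Commute.one_right (Multiplicative.ofAdd (1 : ℤ) ^ k))).isOfFinOrder h).eq_one'

noncomputable def shear (m : ℤ) :
    PresentedGroup (relEvenDihedral k) →* PresentedGroup (relEvenDihedral k) :=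
  lift (commute_of_zero_pow_of_one.mul_right (((Commute.refl _).pow_left k).zpow_right m))

@[simp] theorem shear_of_zero (m : ℤ) :
    shear m (of 0 : PresentedGroup (relEvenDihedral k)) = of 0 :=
  lift_of_zero _

@[simp] theorem shear_of_one (m : ℤ) :
    shear m (of 1 : PresentedGroup (relEvenDihedral k)) = of 1 * of 0 ^ m :=
  lift_of_one _

theorem shear_comp_shear (m n : ℤ) :
    (shear m).comp (shear n) = (shear (m + n) : PresentedGroup (relEvenDihedral k) →* _) :=
  PresentedGroup.ext fun i => by
    fin_cases i <;> simp [zpow_add, mul_assoc]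

theorem shear_zero : (shear 0 : PresentedGroup (relEvenDihedral k) →* _) = MonoidHom.id _ :=
  PresentedGroup.ext fun i => by fin_cases i <;> simp

noncomputable def shearAut (m : ℤ) : MulAut (PresentedGroup (relEvenDihedral k)) :=
  MonoidHom.toMulEquiv (shear m) (shear (-m)) (by rw [shear_comp_shear, neg_add_cancel, shear_zero])
    (by rw [shear_comp_shear, add_neg_cancel, shear_zero])

@[simp] theorem shearAut_apply (m : ℤ) (x : PresentedGroup (relEvenDihedral k)) :
    shearAut m x = shear m x :=
  rfl

theorem shearAut_pow_apply (m : ℤ) (n : ℕ) (x : PresentedGroup (relEvenDihedral k)) :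
    (shearAut m ^ n) x = shear (n * m) x := by
  induction n with
  | zero => simp [shear_zero]
  | succ n ih =>
    rw [pow_succ', MulAut.mul_apply, ih, shearAut_apply, ← MonoidHom.comp_apply, shear_comp_shear,
      Nat.cast_succ, add_one_mul, add_comm]

end relEvenDihedral

theorem stmt8_general (k : ℕ) :
    ∃ η : MulAut (PresentedGroup (relEvenDihedral k)),
      η (PresentedGroup.of 0) = PresentedGroup.of 0 ∧
      η (PresentedGroup.of 1) = PresentedGroup.of 1 * PresentedGroup.of 0 ∧
      ¬ IsOfFinOrder η := by
  refine ⟨relEvenDihedral.shearAut 1, by simp, by simp, ?_⟩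
  exact MulAut.not_isOfFinOrder_of_pow_apply_eq_mul_pow (b := PresentedGroup.of 1)
    relEvenDihedral.not_isOfFinOrder_of_zero fun n => by simp [relEvenDihedral.shearAut_pow_apply]

/-- for `A = ⟨a, b | aᵏ b = b aᵏ⟩` with `k ≥ 2`, the assignment
`a ↦ a`, `b ↦ b a` determines a well-defined automorphism `η` of `A` of infinite order. -/
theorem stmt8 (k : ℕ) (hk : 2 ≤ k) :
    ∃ η : MulAut (PresentedGroup (relEvenDihedral k)),
      η (PresentedGroup.of 0) = PresentedGroup.of 0 ∧
      η (PresentedGroup.of 1) = PresentedGroup.of 1 * PresentedGroup.of 0 ∧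
      ¬ IsOfFinOrder η :=
  stmt8_general k
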